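/- (Singularity criterion of type D, k = n; the key step of the main theorem for D_n/P(α_n).) Let n ≥ 2 and let a_1,…,a_n be nonnegative integers. Then for every integer t, there exists a positive root α ∈ Φ⁺_D with ⟨w(t), α⟩ = 0 if and only if t belongs to the step-matrix entry set S^D_{n,a}. -/

import Mathlib

open Finset

/-- The positive roots of type `Dₙ`: `eₚ+e_q` and `eₚ-e_q` (`p<q`). -/
def PhiD (n : ℕ) : Set (Fin n → ℝ) :=
  {α | ∃ p q : Fin n, p < q ∧
      α = fun i => (if i = p then (1:ℝ) else 0) + (if i = q then 1 else 0)} ∪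
  {α | ∃ p q : Fin n, p < q ∧
      α = fun i => (if i = p then (1:ℝ) else 0) - (if i = q then 1 else 0)}

/-- Standard inner product on `ℝⁿ`. -/
noncomputable def ip (n : ℕ) (v w : Fin n → ℝ) : ℝ := ∑ i, v i * w i

/-- The coordinate form of the weight `λ+ρ-tλ_n` for type `Dₙ`
(coordinates are indexed one-based). -/
noncomputable def wDn (n : ℕ) (a : ℕ → ℤ) (t : ℤ) : Fin n → ℝ := fun i =>
  if i.val + 1 = n then ((a n : ℝ) - (a (n - 1) : ℝ)) / 2 - (t : ℝ) / 2
  else (∑ u ∈ Icc (i.val + 1) (n - 2), (a u : ℝ)) + ((a (n - 1) : ℝ) + (a n : ℝ)) / 2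
    + ((n : ℝ) - (i.val + 1)) - (t : ℝ) / 2

/-- The step-matrix entry set `S^D_{n,a}` (the case `k = n`). -/
def SDn (n : ℕ) (a : ℕ → ℤ) : Set ℚ :=
  {x | ∃ i j : ℕ, 1 ≤ i ∧ i < j ∧ j ≤ n ∧
    x = (∑ u ∈ Icc (n + 1 - i) n, (a u : ℚ))
      + (∑ u ∈ Icc (n + 1 - j) (n - 2), (a u : ℚ)) + i + j - 2}

/-!
The coordinates of `w(t)` are `wᵢ = Tᵢ - (aₙ₋₁ + aₙ)/2 + (n - i) - t/2` (one-based), where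
`Tᵢ = Σ_{u>i} a_u` is a tail sum of the nonnegative labels. Hence `w(t)` is strictly decreasing, so
no root `eₚ - e_q` is orthogonal to it, while `⟨w(t), eₚ + e_q⟩ = N(p, q) - t` for an integer
`N(p, q)` which, after the substitution `i = n - q`, `j = n - p`, is exactly an entry of `S^D_{n,a}`.
-/

lemma sum_Ioc_eq_add_two_top {M : Type*} [AddCommMonoid M] (f : ℕ → M) {p n : ℕ}
    (h : p + 2 ≤ n) : ∑ u ∈ Ioc p n, f u = ∑ u ∈ Ioc p (n - 2), f u + f (n - 1) + f n := by
  obtain ⟨m, rfl⟩ : ∃ m, n = m + 2 := ⟨n - 2, by omega⟩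
  rw [sum_Ioc_succ_top (by omega), sum_Ioc_succ_top (by omega)]
  rfl

lemma ip_add_root {n : ℕ} (v : Fin n → ℝ) (p q : Fin n) :
    ip n v (fun i => (if i = p then (1 : ℝ) else 0) + (if i = q then 1 else 0)) = v p + v q := by
  simp [ip, mul_add, sum_add_distrib]

lemma ip_sub_root {n : ℕ} (v : Fin n → ℝ) (p q : Fin n) :
    ip n v (fun i => (if i = p then (1 : ℝ) else 0) - (if i = q then 1 else 0)) = v p - v q := by
  simp [ip, mul_sub, sum_sub_distrib]

lemma exists_mem_PhiD_ip_eq_zero_iff {n : ℕ} {v : Fin n → ℝ} (hv : StrictAnti v) :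
    (∃ α ∈ PhiD n, ip n v α = 0) ↔ ∃ p q : Fin n, p < q ∧ v p + v q = 0 := by
  constructor
  · rintro ⟨α, ⟨p, q, hpq, rfl⟩ | ⟨p, q, hpq, rfl⟩, hα⟩
    · exact ⟨p, q, hpq, by rwa [ip_add_root] at hα⟩
    · rw [ip_sub_root, sub_eq_zero] at hα
      exact absurd hα (hv hpq).ne'
  · rintro ⟨p, q, hpq, h⟩
    exact ⟨_, Or.inl ⟨p, q, hpq, rfl⟩, by rwa [ip_add_root]⟩

/-- The integer `N(p, q)` with `⟨w(t), eₚ + e_q⟩ = N(p, q) - t`, for zero-based coordinate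
indices `p < q`. -/
def stepEntry (n : ℕ) (a : ℕ → ℤ) (p q : ℕ) : ℤ :=
  ∑ u ∈ Icc (p + 1) (n - 2), a u + ∑ u ∈ Icc (q + 1) n, a u + (2 * n - p - q - 2)

section
variable (n : ℕ) (a : ℕ → ℤ) (t : ℤ)

lemma wDn_eq_tail_sum (i : Fin n) :
    wDn n a t i = ∑ u ∈ Ioc (i : ℕ) n, (a u : ℝ) - ((a (n - 1) : ℝ) + a n) / 2
      + ((n : ℝ) - (i + 1)) - t / 2 := by
  unfold wDn
  split_ifs with h
  · have hIoc : Ioc (i : ℕ) n = {n} := by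
      ext u; simp only [mem_Ioc, mem_singleton]; omega
    have hn : (n : ℝ) = i + 1 := by exact_mod_cast h.symm
    rw [hIoc, sum_singleton, hn]
    ring
  · rw [sum_Ioc_eq_add_two_top _ (by omega), ← Icc_add_one_left_eq_Ioc]
    ring

lemma wDn_sub_wDn {p q : Fin n} (hpq : p ≤ q) :
    wDn n a t p - wDn n a t q = ∑ u ∈ Ioc (p : ℕ) q, (a u : ℝ) + ((q : ℝ) - p) := by
  rw [wDn_eq_tail_sum, wDn_eq_tail_sum, ← sum_Ioc_consecutive _ (Fin.le_def.mp hpq) q.is_lt.le]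
  ring

lemma strictAnti_wDn (ha : ∀ u, 1 ≤ u → u ≤ n → 0 ≤ a u) : StrictAnti (wDn n a t) := by
  intro p q hpq
  have hsum : 0 ≤ ∑ u ∈ Ioc (p : ℕ) q, (a u : ℝ) :=
    sum_nonneg fun u hu => by
      rw [mem_Ioc] at hu
      exact_mod_cast ha u (by omega) (by omega)
  have hgap : (p : ℝ) < q := by exact_mod_cast hpq
  linarith [wDn_sub_wDn n a t hpq.le]

lemma wDn_add_wDn {p q : Fin n} (hpq : p < q) :
    wDn n a t p + wDn n a t q = stepEntry n a p q - t := by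
  rw [wDn_eq_tail_sum, wDn_eq_tail_sum, stepEntry, sum_Ioc_eq_add_two_top _ (by omega),
    Icc_add_one_left_eq_Ioc, Icc_add_one_left_eq_Ioc]
  push_cast
  ring

lemma mem_SDn_iff (x : ℚ) : x ∈ SDn n a ↔ ∃ p q : Fin n, p < q ∧ x = stepEntry n a p q := by
  constructor
  · rintro ⟨i, j, hi, hij, hjn, rfl⟩
    refine ⟨⟨n - j, by omega⟩, ⟨n - i, by omega⟩, Fin.lt_def.mpr (by simp only; omega), ?_⟩
    rw [stepEntry, show n - j + 1 = n + 1 - j by omega, show n - i + 1 = n + 1 - i by omega]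
    push_cast [Nat.cast_sub hjn, Nat.cast_sub (hij.trans_le hjn).le]
    ring
  · rintro ⟨p, q, hpq, rfl⟩
    refine ⟨n - q, n - p, by omega, by omega, by omega, ?_⟩
    rw [stepEntry, show n + 1 - (n - q) = q + 1 by omega, show n + 1 - (n - p) = p + 1 by omega]
    push_cast [Nat.cast_sub q.is_lt.le, Nat.cast_sub p.is_lt.le]
    ring

end

theorem singular_criterion_D_eq_general (n : ℕ)
    (a : ℕ → ℤ) (ha : ∀ u, 1 ≤ u → u ≤ n → 0 ≤ a u) (t : ℤ) :
    (∃ α ∈ PhiD n, ip n (wDn n a t) α = 0) ↔ (t : ℚ) ∈ SDn n a := by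
  rw [exists_mem_PhiD_ip_eq_zero_iff (strictAnti_wDn n a t ha), mem_SDn_iff]
  refine exists₂_congr fun p q => and_congr_right fun hpq => ?_
  rw [wDn_add_wDn n a t hpq, sub_eq_zero, eq_comm]
  norm_cast

/-- Singularity criterion of type `D`, `k = n`: `λ+ρ-tλ_n` is singular iff `t` is an
entry of the step matrix `T^D_{n,λ}`. -/
theorem singular_criterion_D_eq (n : ℕ) (hn : 2 ≤ n)
    (a : ℕ → ℤ) (ha : ∀ u, 1 ≤ u → u ≤ n → 0 ≤ a u) (t : ℤ) :
    (∃ α ∈ PhiD n, ip n (wDn n a t) α = 0) ↔ (t : ℚ) ∈ SDn n a :=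
  singular_criterion_D_eq_general n a ha t
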